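/- arXiv:2312.17405 — 2 statements merged into one kernel-verified Lean document; each statement's English description precedes it below -/
import Mathlib

section
/- Let λ ∈ (0,1) be irrational with convergents p_m/q_m, let η = p − qλ with p, q positive integers and −λ < η < 1, and let T be the circle-rotation-type map T(x) = x + λ if x < 0, T(x) = x − 1 if x > 0, T(0) = −η on [−1, λ). Suppose m is such that q_m ≥ q and p_m ≥ p (not both equalities simultaneously violated), and set h_{m+1} = (q_{m+1} − q) + (p_{m+1} − p) + 1. Then for all integers t with 1 ≤ t < h_{m+1}, |T^t(0)| ≥ |q_m λ − p_m|. -/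
/-!
Starting from `T(0) = qλ - p`, every step of `T` either adds `λ` or subtracts `1`, and `0` is
never met again because `λ` is irrational. Hence `T^t(0) = Bλ - A` with `A + B = p + q + t - 1`,
`B ≥ q` and `T^t(0) < λ`. For `t < h_{m+1}` the bound `T^t(0) < λ` forces `B ≤ q_{m+1}`, and
`(A, B) ≠ (p_{m+1}, q_{m+1})`. The convergents `(p_{m+1}, q_{m+1})`, `(p_m, q_m)` form a
unimodular basis of `ℤ²` whose errors `q_{m+1}λ - p_{m+1}`, `q_mλ - p_m` have opposite signs;
writing `(A, B)` in this basis, the constraint `1 ≤ B ≤ q_{m+1}` forces coefficients of opposite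
signs (or a vanishing one), so `|Bλ - A| ≥ |q_mλ - p_m|`.
-/

noncomputable section

/-- The Gauss map `g(x) = 1/x - ⌊1/x⌋`. -/
def gaussMap (x : ℝ) : ℝ := 1 / x - ⌊(1 : ℝ) / x⌋

/-- `cfA lam k` is the continued fraction coefficient `λ_{k+1}` of `lam = [0; λ₁, λ₂, ...]`,
i.e. `λ_{k+1} = ⌊1 / g^k(lam)⌋`. -/
def cfA (lam : ℝ) (k : ℕ) : ℤ := ⌊1 / (gaussMap^[k] lam)⌋

/-- Shifted convergent numerators: `num lam (m+1) = p_m`, with `num lam 0 = p_{-1} = 1`. -/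
def num (lam : ℝ) : ℕ → ℤ
  | 0 => 1
  | 1 => 0
  | m + 2 => cfA lam m * num lam (m + 1) + num lam m

/-- Shifted convergent denominators: `den lam (m+1) = q_m`, with `den lam 0 = q_{-1} = 0`. -/
def den (lam : ℝ) : ℕ → ℤ
  | 0 => 0
  | 1 => 1
  | m + 2 => cfA lam m * den lam (m + 1) + den lam m

/-- Semiconvergent numerator `P_{m,n}`: `P_{m,0} = p_m` and `P_{m,n} = n·p_m + p_{m-1}` for `n ≥ 1`. -/
def Ps (lam : ℝ) (m n : ℕ) : ℤ :=
  if n = 0 then num lam (m + 1) else n * num lam (m + 1) + num lam m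

/-- Semiconvergent denominator `Q_{m,n}`: `Q_{m,0} = q_m` and `Q_{m,n} = n·q_m + q_{m-1}` for `n ≥ 1`. -/
def Qs (lam : ℝ) (m n : ℕ) : ℤ :=
  if n = 0 then den lam (m + 1) else n * den lam (m + 1) + den lam m

/-- The semiconvergent error `Δ_{m,n}(λ) = Q_{m,n}·λ − P_{m,n}`. -/
def Del (lam : ℝ) (m n : ℕ) : ℝ := (Qs lam m n : ℝ) * lam - (Ps lam m n : ℝ)

/-- The error `Δ_{m-1,0}(λ) = q_{m-1}·λ − p_{m-1}` (with `Δ_{-1,0} = −1` for `m = 0`). -/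
def DelPrev (lam : ℝ) (m : ℕ) : ℝ := (den lam m : ℝ) * lam - (num lam m : ℝ)

/-- The baseline interval map `T` on `[−1, λ)`: `T(x) = x + λ` for `x < 0`, `T(x) = x − 1` for
`x > 0`, and `T(0) = −η`. -/
def Tmap (lam eta : ℝ) (x : ℝ) : ℝ :=
  if x < 0 then x + lam else if 0 < x then x - 1 else -eta

open Set

lemma gaussMap_mem_Ioo {x : ℝ} (hx : Irrational x) : gaussMap x ∈ Ioo 0 1 := by
  have hinv : Irrational (1 / x) := by simpa only [one_div] using hx.inv
  exact ⟨Int.fract_pos.mpr (hinv.ne_int _), Int.fract_lt_one _⟩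

lemma Irrational.gaussMap {x : ℝ} (hx : Irrational x) : Irrational (gaussMap x) := by
  rw [_root_.gaussMap, one_div]
  exact hx.inv.sub_intCast _

lemma gaussMap_iterate_mem_Ioo {lam : ℝ} (h : lam ∈ Ioo 0 1) (hirr : Irrational lam) (k : ℕ) :
    gaussMap^[k] lam ∈ Ioo 0 1 := by
  cases k with
  | zero => exact h
  | succ k =>
    rw [Function.iterate_succ_apply']
    exact gaussMap_mem_Ioo (Function.Iterate.rec Irrational hirr (fun _ hx => hx.gaussMap) k)

section ContinuedFraction

variable {lam : ℝ}

lemma one_le_cfA (hg : ∀ k, gaussMap^[k] lam ∈ Ioo 0 1) (k : ℕ) : 1 ≤ cfA lam k := by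
  obtain ⟨hx0, hx1⟩ := hg k
  exact Int.le_floor.mpr (by exact_mod_cast (one_lt_one_div hx0 hx1).le)

lemma one_le_den_succ (hg : ∀ k, gaussMap^[k] lam ∈ Ioo 0 1) (k : ℕ) :
    1 ≤ den lam (k + 1) := by
  suffices ∀ k, 0 ≤ den lam k ∧ 1 ≤ den lam (k + 1) from (this k).2
  intro k
  induction k with
  | zero => simp [den]
  | succ k ih =>
    refine ⟨by linarith [ih.2], ?_⟩
    show 1 ≤ cfA lam k * den lam (k + 1) + den lam k
    nlinarith [one_le_cfA hg k, ih.1, ih.2]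

lemma den_succ_mul_num_sub (k : ℕ) :
    den lam (k + 1) * num lam k - den lam k * num lam (k + 1) = (-1) ^ k := by
  induction k with
  | zero => simp [den, num]
  | succ k ih =>
    show (cfA lam k * den lam (k + 1) + den lam k) * num lam (k + 1)
        - den lam (k + 1) * (cfA lam k * num lam (k + 1) + num lam k) = (-1) ^ (k + 1)
    linear_combination (-1 : ℤ) * ih

lemma DelPrev_add_two (k : ℕ) :
    DelPrev lam (k + 2) = cfA lam k * DelPrev lam (k + 1) + DelPrev lam k := by
  simp only [DelPrev, den, num]
  push_cast
  ring

lemma DelPrev_succ (hg : ∀ k, gaussMap^[k] lam ∈ Ioo 0 1) (k : ℕ) :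
    DelPrev lam (k + 1) = -(gaussMap^[k] lam) * DelPrev lam k := by
  induction k with
  | zero => simp [DelPrev, den, num]
  | succ k ih =>
    have hx : gaussMap^[k] lam ≠ 0 := (hg k).1.ne'
    have hcfA : (cfA lam k : ℝ) = 1 / gaussMap^[k] lam - gaussMap^[k + 1] lam := by
      rw [Function.iterate_succ_apply']
      simp only [gaussMap, cfA, sub_sub_cancel]
    rw [DelPrev_add_two, ih, hcfA]
    field_simp
    ring

lemma DelPrev_mul_DelPrev_succ_nonpos (hg : ∀ k, gaussMap^[k] lam ∈ Ioo 0 1) (k : ℕ) :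
    DelPrev lam k * DelPrev lam (k + 1) ≤ 0 := by
  rw [DelPrev_succ hg]
  nlinarith [(hg k).1, mul_self_nonneg (DelPrev lam k)]

lemma abs_DelPrev_le_one (hg : ∀ k, gaussMap^[k] lam ∈ Ioo 0 1) (k : ℕ) :
    |DelPrev lam k| ≤ 1 := by
  induction k with
  | zero => simp [DelPrev, den, num]
  | succ k ih =>
    obtain ⟨hx0, hx1⟩ := hg k
    rw [DelPrev_succ hg, abs_mul, abs_neg, abs_of_pos hx0]
    nlinarith [abs_nonneg (DelPrev lam k)]

end ContinuedFraction

lemma abs_le_abs_add_of_mul_nonneg {R : Type*} [CommRing R] [LinearOrder R] [IsStrictOrderedRing R]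
    {x y : R} (hxy : 0 ≤ x * y) : |y| ≤ |x + y| :=
  sq_le_sq.mp (by nlinarith)

lemma best_approx_of_unimodular {lam : ℝ} {N₁ D₁ N₂ D₂ A B : ℤ}
    (hdet : (D₂ * N₁ - D₁ * N₂) ^ 2 = 1) (hD₁ : 1 ≤ D₁)
    (hopp : (D₁ * lam - N₁) * (D₂ * lam - N₂) ≤ 0)
    (hB : 1 ≤ B) (hBD : B ≤ D₂) (hne : ¬(A = N₂ ∧ B = D₂)) :
    |D₁ * lam - N₁| ≤ |B * lam - A| := by
  set s := D₂ * N₁ - D₁ * N₂ with hs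
  -- Cramer's rule: `(A, B) = α (N₂, D₂) + β (N₁, D₁)`.
  set α := s * (B * N₁ - A * D₁)
  set β := -(s * (B * N₂ - A * D₂))
  have hBαβ : α * D₂ + β * D₁ = B := by linear_combination (s * B) * hs + B * hdet
  have hAαβ : α * N₂ + β * N₁ = A := by linear_combination (s * A) * hs + A * hdet
  have herr : (B : ℝ) * lam - A = α * (D₂ * lam - N₂) + β * (D₁ * lam - N₁) := by
    rw [← hBαβ, ← hAαβ]
    push_cast
    ring
  rcases eq_or_ne β 0 with hβ | hβ
  · rw [hβ] at hBαβ hAαβ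
    have hα : α = 1 := by nlinarith
    exact absurd ⟨by simpa [hα] using hAαβ.symm, by simpa [hα] using hBαβ.symm⟩ hne
  have hαβ : α * β ≤ 0 := by
    by_contra! hαβ
    rcases lt_or_gt_of_ne hβ with hβ | hβ
    · nlinarith [neg_of_mul_pos_left hαβ hβ.le]
    · nlinarith [pos_of_mul_pos_left hαβ hβ.le]
  have hβ1 : (1 : ℝ) ≤ |(β : ℝ)| := by exact_mod_cast Int.one_le_abs hβ
  have hsame : 0 ≤ (α * (D₂ * lam - N₂)) * (β * (D₁ * lam - N₁)) := by
    have : ((α * β : ℤ) : ℝ) ≤ 0 := by exact_mod_cast hαβ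
    push_cast at this
    nlinarith
  calc |(D₁ : ℝ) * lam - N₁| ≤ |(β : ℝ)| * |D₁ * lam - N₁| :=
        le_mul_of_one_le_left (abs_nonneg _) hβ1
    _ = |β * (D₁ * lam - N₁)| := (abs_mul _ _).symm
    _ ≤ |(B : ℝ) * lam - A| := herr ▸ abs_le_abs_add_of_mul_nonneg hsame

lemma best_approx_convergent {lam : ℝ} (hg : ∀ k, gaussMap^[k] lam ∈ Ioo 0 1) (m : ℕ)
    {A B : ℤ} (hB : 1 ≤ B) (hBD : B ≤ den lam (m + 2))
    (hne : ¬(A = num lam (m + 2) ∧ B = den lam (m + 2))) :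
    |(den lam (m + 1) : ℝ) * lam - num lam (m + 1)| ≤ |B * lam - A| := by
  refine best_approx_of_unimodular ?_ (one_le_den_succ hg m)
    (DelPrev_mul_DelPrev_succ_nonpos hg (m + 1)) hB hBD hne
  rw [den_succ_mul_num_sub, ← pow_mul]
  exact Even.neg_one_pow ⟨m + 1, by ring⟩

lemma le_of_add_le_of_mul_sub_lt {lam : ℝ} (hlam : 0 ≤ lam) {A B N D : ℤ}
    (hND : -1 ≤ D * lam - N) (hsum : A + B ≤ N + D) (hlt : B * lam - A < lam) : B ≤ D := by
  by_contra! hDB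
  have hDB' : (D : ℝ) ≤ B - 1 := by exact_mod_cast Int.le_sub_one_of_lt hDB
  have hNA : N - 1 < A := by exact_mod_cast (show (N : ℝ) - 1 < A by nlinarith)
  omega

lemma exists_Tmap_iterate_succ_zero_eq {lam : ℝ} (hirr : Irrational lam) {p q : ℕ} (hq : 0 < q)
    {eta : ℝ} (heta : eta = (p : ℝ) - (q : ℝ) * lam) (heta1 : -lam < eta) (t : ℕ) :
    ∃ A B : ℤ, (Tmap lam eta)^[t + 1] 0 = B * lam - A ∧ (q : ℤ) ≤ B ∧
      A + B = p + q + t ∧ (B : ℝ) * lam - A < lam := by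
  induction t with
  | zero =>
    refine ⟨p, q, ?_, le_rfl, by simp, ?_⟩
    · simp [Tmap, heta]
    · push_cast
      linarith
  | succ t ih =>
    obtain ⟨A, B, hT, hqB, hsum, hlt⟩ := ih
    have hx : (B : ℝ) * lam - A ≠ 0 :=
      ((hirr.intCast_mul (by omega)).sub_intCast A).ne_zero
    rw [Function.iterate_succ_apply', hT]
    rcases hx.lt_or_gt with hneg | hpos
    · refine ⟨A, B + 1, ?_, by omega, by omega, ?_⟩
      · simp only [Tmap, if_pos hneg]; push_cast; ring
      · push_cast; linarith
    · refine ⟨A + 1, B, ?_, hqB, by omega, ?_⟩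
      · simp only [Tmap, if_neg hpos.not_gt, if_pos hpos]; push_cast; ring
      · push_cast; linarith

theorem stmt14_general (lam : ℝ) (h : lam ∈ Set.Ioo (0 : ℝ) 1) (hirr : Irrational lam)
    (p q : ℕ) (hq : 0 < q)
    (eta : ℝ) (heta : eta = (p : ℝ) - (q : ℝ) * lam)
    (heta1 : -lam < eta)
    (m : ℕ)
    (t : ℕ) (ht1 : 1 ≤ t)
    (ht2 : (t : ℤ) < (den lam (m + 2) - q) + (num lam (m + 2) - p) + 1) :
    |(den lam (m + 1) : ℝ) * lam - (num lam (m + 1) : ℝ)| ≤ |(Tmap lam eta)^[t] 0| := by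
  have hg := gaussMap_iterate_mem_Ioo h hirr
  obtain ⟨s, rfl⟩ : ∃ s, t = s + 1 := ⟨t - 1, by omega⟩
  obtain ⟨A, B, hT, hqB, hsum, hlt⟩ := exists_Tmap_iterate_succ_zero_eq hirr hq heta heta1 s
  have hAB : A + B < num lam (m + 2) + den lam (m + 2) := by push_cast at ht2; omega
  have hBD : B ≤ den lam (m + 2) :=
    le_of_add_le_of_mul_sub_lt h.1.le (neg_le_of_abs_le (abs_DelPrev_le_one hg (m + 2)))
      hAB.le hlt
  rw [hT]
  exact best_approx_convergent hg m (by omega) hBD (by omega)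

/-- Let `λ ∈ (0,1)` be irrational with convergents `p_m/q_m`, `η = p − qλ` with `p, q` positive
integers and `−λ < η < 1`. If `q_m ≥ q` and `p_m ≥ p`, then for all `1 ≤ t < h_{m+1}`, where
`h_{m+1} = (q_{m+1} − q) + (p_{m+1} − p) + 1`, one has `|T^t(0)| ≥ |q_m λ − p_m|`. -/
theorem stmt14 (lam : ℝ) (h : lam ∈ Set.Ioo (0 : ℝ) 1) (hirr : Irrational lam)
    (p q : ℕ) (hp : 0 < p) (hq : 0 < q)
    (eta : ℝ) (heta : eta = (p : ℝ) - (q : ℝ) * lam)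
    (heta1 : -lam < eta) (heta2 : eta < 1)
    (m : ℕ) (hqm : (q : ℤ) ≤ den lam (m + 1)) (hpm : (p : ℤ) ≤ num lam (m + 1))
    (t : ℕ) (ht1 : 1 ≤ t)
    (ht2 : (t : ℤ) < (den lam (m + 2) - q) + (num lam (m + 2) - p) + 1) :
    |(den lam (m + 1) : ℝ) * lam - (num lam (m + 1) : ℝ)| ≤ |(Tmap lam eta)^[t] 0| :=
  stmt14_general lam h hirr p q hq eta heta heta1 m t ht1 ht2
end
end

section
/- Let λ ∈ (0,1) be irrational and let m be even with m ≥ 2. For all j ≥ 0 and all n with 0 ≤ n < λ_{m+j+1}, the parallelogram S_{m+j,n}(λ) scales to S_{j,n}(g^m(λ)): precisely, (1/|Δ_{m−1,0}(λ)|)·S_{m+j,n}(λ) = S_{j,n}(g^m(λ)), where S_{m,n}(λ) is defined for even m as (C₀ − Δ_{m,0}(λ)) ∩ C_c ∩ (C_c − Δ_{m,n+1}(λ)) ∩ (C_{d+1} − (nΔ_{m,0}(λ) + Δ_{m−1,0}(λ))) and for odd m as (C₀ − (nΔ_{m,0}(λ) + Δ_{m−1,0}(λ))) ∩ C_c ∩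 (C_c − Δ_{m,n+1}(λ)) ∩ (C_{d+1} − Δ_{m,0}(λ)). -/
noncomputable section

/-- The cone `C₀ = {z` in the closed upper half-plane `: Arg z ∈ [0, α₀)}`. -/
def coneC0 (a0 : ℝ) : Set ℂ := {z | 0 ≤ z.im ∧ Complex.arg z ∈ Set.Ico 0 a0}

/-- The cone `C_{d+1} = {z` in the closed upper half-plane `: Arg z ∈ (π − α_{d+1}, π]}`. -/
def coneCd1 (a1 : ℝ) : Set ℂ :=
  {z | 0 ≤ z.im ∧ Complex.arg z ∈ Set.Ioc (Real.pi - a1) Real.pi}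

/-- The middle cone `C_c = {0} ∪ {z ∈ ℍ : Arg z ∈ [α₀, π − α_{d+1}]}`. -/
def coneCc (a0 a1 : ℝ) : Set ℂ :=
  {0} ∪ {z | 0 < z.im ∧ Complex.arg z ∈ Set.Icc a0 (Real.pi - a1)}

/-- Translation of a subset of `ℂ` by a real number: `A + c = {a + c : a ∈ A}`. -/
def trSet (A : Set ℂ) (c : ℝ) : Set ℂ := (fun z => z + (c : ℂ)) '' A

/-- Scaling of a subset of `ℂ` by a real number: `r·A = {r·a : a ∈ A}`. -/
def scSet (r : ℝ) (A : Set ℂ) : Set ℂ := (fun z => (r : ℂ) * z) '' A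

/-- The parallelogram `S_{m,n}(λ)`, defined for even `m` as
`(C₀ − Δ_{m,0}) ∩ C_c ∩ (C_c − Δ_{m,n+1}) ∩ (C_{d+1} − (nΔ_{m,0} + Δ_{m−1,0}))` and for odd `m` as
`(C₀ − (nΔ_{m,0} + Δ_{m−1,0})) ∩ C_c ∩ (C_c − Δ_{m,n+1}) ∩ (C_{d+1} − Δ_{m,0})`. -/
def Smn (a0 a1 lam : ℝ) (m n : ℕ) : Set ℂ :=
  if Even m then
    trSet (coneC0 a0) (-(Del lam m 0)) ∩ coneCc a0 a1 ∩
      trSet (coneCc a0 a1) (-(Del lam m (n + 1))) ∩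
      trSet (coneCd1 a1) (-((n : ℝ) * Del lam m 0 + DelPrev lam m))
  else
    trSet (coneC0 a0) (-((n : ℝ) * Del lam m 0 + DelPrev lam m)) ∩ coneCc a0 a1 ∩
      trSet (coneCc a0 a1) (-(Del lam m (n + 1))) ∩ trSet (coneCd1 a1) (-(Del lam m 0))

/-!
The paper's key lemma `Δ_{j,n}(g^m λ) = −Δ_{m+j,n}(λ) / Δ_{m−1,0}(λ)` comes from the one-step
identity `λ · Δ_{k−1,0}(g λ) = −Δ_{k,0}(λ)`, which is the recursion of the convergents read
through `λ · g(λ) = 1 − λ₁ λ`; since every `Δ_{m,n}` is a combination of `Δ_{m,0}` and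
`Δ_{m−1,0}`, it suffices to iterate it for `Δ_{k−1,0}`. For even `m` the factor `Δ_{m−1,0}(λ)`
is negative, so `1/|Δ_{m−1,0}(λ)|` maps every translation vector of `S_{m+j,n}(λ)` to the
corresponding one of `S_{j,n}(g^m λ)`, while the cones, being invariant under positive
scalings, are left unchanged. Parity of `m + j` and `j` agree, so the same case of the
definition of `S` applies on both sides.
-/

section GaussMap

variable {x : ℝ}

theorem irrational_gaussMap (hx : Irrational x) : Irrational (gaussMap x) := by
  simpa [gaussMap, one_div] using hx.inv.sub_intCast ⌊x⁻¹⌋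

theorem gaussMap_pos (hx : Irrational x) : 0 < gaussMap x := by
  refine Int.fract_pos.2 fun hfloor => ?_
  exact (hx.inv.ne_int ⌊x⁻¹⌋) (by simpa [one_div] using hfloor)

theorem mul_gaussMap (hx : x ≠ 0) : x * gaussMap x = 1 - cfA x 0 * x := by
  simp only [gaussMap, cfA, Function.iterate_zero_apply]
  field_simp

end GaussMap

section Convergents

variable (lam : ℝ)

theorem cfA_gaussMap (k : ℕ) : cfA (gaussMap lam) k = cfA lam (k + 1) := by
  simp only [cfA, Function.iterate_succ_apply]

theorem den_gaussMap : ∀ k, den (gaussMap lam) k = num lam (k + 1)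
  | 0 => rfl
  | 1 => by simp [den, num]
  | k + 2 => by
    simp only [den, num, cfA_gaussMap, den_gaussMap k, den_gaussMap (k + 1)]

theorem den_succ_eq_gaussMap :
    ∀ k, den lam (k + 1) = cfA lam 0 * den (gaussMap lam) k + num (gaussMap lam) k
  | 0 => by simp [den, num]
  | 1 => by simp [den, num]
  | k + 2 => by
    have h₀ := den_succ_eq_gaussMap k
    have h₁ := den_succ_eq_gaussMap (k + 1)
    simp only [den, num, cfA_gaussMap] at h₀ h₁ ⊢
    linear_combination cfA lam (k + 1) * h₁ + h₀

theorem Del_zero (m : ℕ) : Del lam m 0 = DelPrev lam (m + 1) := by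
  simp [Del, DelPrev, Qs, Ps]

theorem Del_of_ne_zero {n : ℕ} (hn : n ≠ 0) (m : ℕ) :
    Del lam m n = n * DelPrev lam (m + 1) + DelPrev lam m := by
  simp only [Del, DelPrev, Qs, Ps, if_neg hn]
  push_cast
  ring

end Convergents

section KeyLemma

variable {lam : ℝ}

theorem mul_DelPrev_gaussMap (hlam : lam ≠ 0) (k : ℕ) :
    lam * DelPrev (gaussMap lam) k = -DelPrev lam (k + 1) := by
  have hg := mul_gaussMap hlam
  have hden : (den (gaussMap lam) k : ℝ) = num lam (k + 1) := by
    exact_mod_cast den_gaussMap lam k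
  have hnum :
      (den lam (k + 1) : ℝ) = cfA lam 0 * den (gaussMap lam) k + num (gaussMap lam) k := by
    exact_mod_cast den_succ_eq_gaussMap lam k
  simp only [DelPrev]
  linear_combination (den (gaussMap lam) k : ℝ) * hg + lam * hnum + hden

theorem DelPrev_mul_DelPrev_gaussMap_iterate (hlam : Irrational lam) (m k : ℕ) :
    DelPrev lam m * DelPrev (gaussMap^[m] lam) k = -DelPrev lam (m + k) := by
  induction m generalizing lam with
  | zero => simp [DelPrev, den, num]
  | succ m ih =>
    rw [Function.iterate_succ_apply, Nat.add_right_comm]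
    linear_combination DelPrev (gaussMap^[m] (gaussMap lam)) k *
        mul_DelPrev_gaussMap hlam.ne_zero m - lam * ih (irrational_gaussMap hlam) +
      mul_DelPrev_gaussMap hlam.ne_zero (m + k)

theorem neg_one_pow_mul_DelPrev_neg (hpos : 0 < lam) (hlam : Irrational lam) (m : ℕ) :
    (-1) ^ m * DelPrev lam m < 0 := by
  induction m generalizing lam with
  | zero => simp [DelPrev, den, num]
  | succ m ih =>
    rw [← neg_neg (DelPrev lam (m + 1)), ← mul_DelPrev_gaussMap hlam.ne_zero m]
    have := ih (gaussMap_pos hlam) (irrational_gaussMap hlam)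
    calc (-1) ^ (m + 1) * -(lam * DelPrev (gaussMap lam) m)
        = lam * ((-1) ^ m * DelPrev (gaussMap lam) m) := by ring
      _ < 0 := mul_neg_of_pos_of_neg hpos this

end KeyLemma

section Scaling

theorem scSet_inter {r : ℝ} (hr : r ≠ 0) (A B : Set ℂ) :
    scSet r (A ∩ B) = scSet r A ∩ scSet r B :=
  Set.image_inter (mul_right_injective₀ (Complex.ofReal_ne_zero.2 hr))

theorem scSet_trSet (r c : ℝ) (A : Set ℂ) :
    scSet r (trSet A c) = trSet (scSet r A) (r * c) := by
  simp only [scSet, trSet, Set.image_image]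
  congr 1
  ext z
  push_cast
  ring

theorem scSet_eq_self {S : Set ℂ} (hS : ∀ s : ℝ, 0 < s → ∀ z ∈ S, (s : ℂ) * z ∈ S)
    {r : ℝ} (hr : 0 < r) : scSet r S = S := by
  refine Set.Subset.antisymm (Set.image_subset_iff.2 fun z hz => hS r hr z hz) fun z hz => ?_
  refine ⟨(r⁻¹ : ℝ) * z, hS r⁻¹ (inv_pos.2 hr) z hz, ?_⟩
  simp [hr.ne']

theorem scSet_coneC0 (a0 : ℝ) {r : ℝ} (hr : 0 < r) : scSet r (coneC0 a0) = coneC0 a0 := by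
  refine scSet_eq_self (fun s hs z hz => ?_) hr
  exact ⟨by simpa using mul_nonneg hs.le hz.1, by simpa [Complex.arg_real_mul z hs] using hz.2⟩

theorem scSet_coneCd1 (a1 : ℝ) {r : ℝ} (hr : 0 < r) : scSet r (coneCd1 a1) = coneCd1 a1 := by
  refine scSet_eq_self (fun s hs z hz => ?_) hr
  exact ⟨by simpa using mul_nonneg hs.le hz.1, by simpa [Complex.arg_real_mul z hs] using hz.2⟩

theorem scSet_coneCc (a0 a1 : ℝ) {r : ℝ} (hr : 0 < r) :
    scSet r (coneCc a0 a1) = coneCc a0 a1 := by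
  refine scSet_eq_self (fun s hs z hz => ?_) hr
  rcases hz with rfl | ⟨him, harg⟩
  · rw [mul_zero]
    exact Or.inl rfl
  · exact Or.inr ⟨by simpa using mul_pos hs him, by simpa [Complex.arg_real_mul z hs] using harg⟩

theorem mul_Del_of_mul_DelPrev {r lam mu : ℝ} {k j : ℕ}
    (h₀ : r * DelPrev lam k = DelPrev mu j) (h₁ : r * DelPrev lam (k + 1) = DelPrev mu (j + 1))
    (n : ℕ) : r * Del lam k n = Del mu j n := by
  rcases eq_or_ne n 0 with rfl | hn
  · rw [Del_zero, Del_zero, h₁]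
  · rw [Del_of_ne_zero lam hn, Del_of_ne_zero mu hn, ← h₀, ← h₁]
    ring

theorem scSet_Smn (a0 a1 : ℝ) {r lam mu : ℝ} {k j : ℕ} (hr : 0 < r) (hkj : Even k ↔ Even j)
    (h₀ : r * DelPrev lam k = DelPrev mu j) (h₁ : r * DelPrev lam (k + 1) = DelPrev mu (j + 1))
    (n : ℕ) : scSet r (Smn a0 a1 lam k n) = Smn a0 a1 mu j n := by
  have hDel := mul_Del_of_mul_DelPrev h₀ h₁
  have hshift : r * -((n : ℝ) * Del lam k 0 + DelPrev lam k)
      = -((n : ℝ) * Del mu j 0 + DelPrev mu j) := by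
    rw [← hDel, ← h₀]
    ring
  simp only [Smn, hkj]
  split_ifs <;>
  · simp only [scSet_inter hr.ne', scSet_trSet, scSet_coneC0 a0 hr, scSet_coneCc a0 a1 hr,
      scSet_coneCd1 a1 hr, mul_neg, hDel, hshift]

end Scaling

theorem stmt18_general (a0 a1 : ℝ)
    (lam : ℝ) (h : lam ∈ Set.Ioo (0 : ℝ) 1) (hirr : Irrational lam)
    (m : ℕ) (hme : Even m) (j n : ℕ) :
    scSet (1 / |DelPrev lam m|) (Smn a0 a1 lam (m + j) n) =
      Smn a0 a1 (gaussMap^[m] lam) j n := by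
  have hneg : DelPrev lam m < 0 := by
    simpa [hme.neg_one_pow] using neg_one_pow_mul_DelPrev_neg h.1 hirr m
  have hscale (i : ℕ) :
      1 / |DelPrev lam m| * DelPrev lam (m + i) = DelPrev (gaussMap^[m] lam) i := by
    rw [abs_of_neg hneg, ← neg_neg (DelPrev lam (m + i)),
      ← DelPrev_mul_DelPrev_gaussMap_iterate hirr m i]
    field_simp [hneg.ne]
  refine scSet_Smn a0 a1 (one_div_pos.2 (abs_pos.2 hneg.ne)) ?_ (hscale j) (hscale (j + 1)) n
  rw [Nat.even_add]
  tauto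

/-- For irrational `λ ∈ (0,1)` and even `m ≥ 2`, for all `j ≥ 0` and `0 ≤ n < λ_{m+j+1}`,
`(1/|Δ_{m−1,0}(λ)|)·S_{m+j,n}(λ) = S_{j,n}(g^m(λ))`. -/
theorem stmt18 (a0 a1 : ℝ) (h0 : a0 ∈ Set.Ioo 0 Real.pi) (h1 : a1 ∈ Set.Ioo 0 Real.pi)
    (lam : ℝ) (h : lam ∈ Set.Ioo (0 : ℝ) 1) (hirr : Irrational lam)
    (m : ℕ) (hm : 2 ≤ m) (hme : Even m) (j n : ℕ) (hn : (n : ℤ) < cfA lam (m + j)) :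
    scSet (1 / |DelPrev lam m|) (Smn a0 a1 lam (m + j) n) =
      Smn a0 a1 (gaussMap^[m] lam) j n :=
  stmt18_general a0 a1 lam h hirr m hme j n
end
end
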